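/- Let $n \geq 3$ and $N = 2^n - 1$. The number of unordered pairs $\{h, \ell\}$ of distinct elements of $\{1,\dots,N-1\}$ that are incomparable for the domination order $\preceq$ (i.e. $h \not\preceq \ell$ and $\ell \not\preceq h$) equals $2^{n-1}(2^n + 1) - 3^n$. -/

import Mathlib

/-!
Reading `h < 2 ^ n` through its set of binary digits identifies the domination order on
`{0, …, 2 ^ n - 1}` with inclusion of subsets of an `n`-element set. As `0` and `2 ^ n - 1` are
comparable with everything, the incomparable pairs inside `{1, …, 2 ^ n - 2}` are all the
incomparable pairs of the Boolean lattice. In any finite partial order on `m` elements, the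
incomparable `2`-subsets and the comparable ordered pairs (diagonal included) together number
`(m + 1).choose 2`, which is `2 ^ (n - 1) * (2 ^ n + 1)` for `m = 2 ^ n`; and the pairs `a ⊆ b`
number `3 ^ n`, since each digit lies in `a`, in `b \ a`, or outside `b`.
-/

/-- `j`-th binary digit (zero-based) of `h`, as `0` or `1`; `epsb h (j-1)` is the
paper's `ε_j(h)`. -/
def epsb (h j : ℕ) : ℕ := if h.testBit j then 1 else 0

/-- Domination order: every binary digit of `h` (among the first `n`) is at most that of `ℓ`. -/
def Dom (n h ℓ : ℕ) : Prop := ∀ j < n, epsb h j ≤ epsb ℓ j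

/-- A tuple indexed by `Fin (2^n - 1)` (index `h` standing for `h+1 ∈ {1,…,2^n-1}`)
is reduced if entries at incomparable indices are coprime. -/
def Reduced (n : ℕ) (z : Fin (2^n - 1) → ℕ) : Prop :=
  ∀ h ℓ : Fin (2^n - 1), ¬ Dom n (h.1+1) (ℓ.1+1) → ¬ Dom n (ℓ.1+1) (h.1+1) →
    Nat.gcd (z h) (z ℓ) = 1

open Finset

section IncomparablePairs

variable {α : Type*} [DecidableEq α] {s : Finset α} {r : α → α → Prop} [DecidableRel r]

theorem card_incomparable_pairs_add_card_strict_comparable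
    (hanti : ∀ x ∈ s, ∀ y ∈ s, r x y → r y x → x = y) :
    #{t ∈ s.powersetCard 2 | ∀ x ∈ t, ∀ y ∈ t, x ≠ y → ¬ r x y ∧ ¬ r y x} +
      #{p ∈ s ×ˢ s | r p.1 p.2 ∧ p.1 ≠ p.2} = (#s).choose 2 := by
  rw [← card_powersetCard, ← card_filter_add_card_filter_not (s := s.powersetCard 2)
    (fun t : Finset α => ∀ x ∈ t, ∀ y ∈ t, x ≠ y → ¬ r x y ∧ ¬ r y x)]
  congr 1
  refine card_bij (fun (p : α × α) _ => ({p.1, p.2} : Finset α)) ?_ ?_ ?_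
  · rintro ⟨x, y⟩ hp
    simp only [mem_filter, mem_product] at hp ⊢
    obtain ⟨⟨hx, hy⟩, hr, hxy⟩ := hp
    refine ⟨mem_powersetCard.2 ⟨insert_subset hx (singleton_subset_iff.2 hy), card_pair hxy⟩, ?_⟩
    simp [hxy, hr]
  · rintro ⟨x, y⟩ hp ⟨z, w⟩ hq hpq
    simp only [mem_filter, mem_product] at hp hq
    have := congrArg (fun t : Finset α => (t : Set α)) hpq
    simp only [coe_pair, Set.pair_eq_pair_iff] at this
    rcases this with ⟨rfl, rfl⟩ | ⟨rfl, rfl⟩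
    · rfl
    · exact absurd (hanti x hp.1.1 y hp.1.2 hp.2.1 hq.2.1) hp.2.2
  · intro t ht
    simp only [mem_filter, mem_powersetCard, card_eq_two] at ht
    obtain ⟨⟨hts, x, y, hxy, rfl⟩, hcomparable⟩ := ht
    have hx : x ∈ s := hts (mem_insert_self x _)
    have hy : y ∈ s := hts (mem_insert_of_mem (mem_singleton_self y))
    by_cases hr : r x y
    · exact ⟨(x, y), by simp [hx, hy, hxy, hr]⟩
    · have hr' : r y x := by
        contrapose! hcomparable
        simp [hxy, hr, hcomparable]
      exact ⟨(y, x), by simp [hx, hy, Ne.symm hxy, hr'], pair_comm y x⟩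

theorem card_incomparable_pairs_add_card_comparable
    (hrefl : ∀ x ∈ s, r x x) (hanti : ∀ x ∈ s, ∀ y ∈ s, r x y → r y x → x = y) :
    #{t ∈ s.powersetCard 2 | ∀ x ∈ t, ∀ y ∈ t, x ≠ y → ¬ r x y ∧ ¬ r y x} +
      #{p ∈ s ×ˢ s | r p.1 p.2} = (#s + 1).choose 2 := by
  have hdiag : {p ∈ s ×ˢ s | r p.1 p.2 ∧ p.1 = p.2} = s.diag := by
    ext ⟨x, y⟩
    simp only [mem_filter, mem_product, mem_diag]
    constructor
    · rintro ⟨⟨hx, -⟩, -, rfl⟩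
      exact ⟨hx, rfl⟩
    · rintro ⟨hx, rfl⟩
      exact ⟨⟨hx, hx⟩, hrefl x hx, rfl⟩
  rw [← card_filter_add_card_filter_not (s := {p ∈ s ×ˢ s | r p.1 p.2}) (fun p => p.1 ≠ p.2),
    filter_filter, filter_filter, ← add_assoc,
    card_incomparable_pairs_add_card_strict_comparable hanti]
  simp_rw [not_ne_iff]
  rw [hdiag, diag_card, Nat.choose_succ_succ', Nat.choose_one_right, add_comm]

theorem filter_incomparable_powersetCard_two_eq_of_subset {t : Finset α} (hts : t ⊆ s)
    (hcomp : ∀ x ∈ s, x ∉ t → ∀ y ∈ s, r x y ∨ r y x) :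
    {u ∈ t.powersetCard 2 | ∀ x ∈ u, ∀ y ∈ u, x ≠ y → ¬ r x y ∧ ¬ r y x} =
      {u ∈ s.powersetCard 2 | ∀ x ∈ u, ∀ y ∈ u, x ≠ y → ¬ r x y ∧ ¬ r y x} := by
  ext u
  simp only [mem_filter, mem_powersetCard]
  refine ⟨fun ⟨⟨hut, hu⟩, hinc⟩ => ⟨⟨hut.trans hts, hu⟩, hinc⟩, fun ⟨⟨hus, hu⟩, hinc⟩ => ?_⟩
  refine ⟨⟨fun x hx => ?_, hu⟩, hinc⟩
  by_contra hxt
  obtain ⟨y, hy, hyx⟩ := exists_mem_ne (s := u) (by omega) x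
  have := hinc x hx y hy hyx.symm
  rcases hcomp x (hus hx) hxt y (hus hy) with h | h <;> tauto

end IncomparablePairs

theorem card_filter_subset_pairs (α : Type*) [Fintype α] [DecidableEq α] :
    #{p : Finset α × Finset α | p.1 ⊆ p.2} = 3 ^ Fintype.card α := by
  have hfiber (b : Finset α) :
      ({p ∈ {p : Finset α × Finset α | p.1 ⊆ p.2} | p.2 = b} : Finset _) = b.powerset ×ˢ {b} := by
    ext ⟨a, c⟩
    simp only [mem_filter, mem_univ, true_and, mem_product, mem_powerset, mem_singleton]
    exact and_congr_left fun hc => by rw [hc]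
  rw [card_eq_sum_card_fiberwise (f := Prod.snd) (t := univ) (fun _ _ => mem_coe.2 (mem_univ _))]
  simp only [hfiber, card_product, card_powerset, card_singleton, mul_one]
  simpa using Fintype.sum_pow_mul_eq_add_pow α (2 : ℕ) 1

def bitSet (n h : ℕ) : Finset (Fin n) := {j | h.testBit j}

section Bits

variable {n h ℓ : ℕ}

@[simp]
theorem mem_bitSet {j : Fin n} : j ∈ bitSet n h ↔ h.testBit j := by simp [bitSet]

theorem dom_iff_bitSet_subset : Dom n h ℓ ↔ bitSet n h ⊆ bitSet n ℓ := by
  simp only [Dom, epsb, subset_iff, mem_bitSet, Fin.forall_iff]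
  refine forall₂_congr fun j _ => ?_
  cases h.testBit j <;> cases ℓ.testBit j <;> simp

theorem bitSet_injOn : Set.InjOn (bitSet n) (range (2 ^ n)) := by
  intro h hh ℓ hℓ he
  refine Nat.eq_of_testBit_eq fun j => ?_
  by_cases hj : j < n
  · simpa using congrArg (⟨j, hj⟩ ∈ ·) he
  · have hle : 2 ^ n ≤ 2 ^ j := Nat.pow_le_pow_right two_pos (not_lt.1 hj)
    rw [Nat.testBit_lt_two_pow ((mem_range.1 hh).trans_le hle),
      Nat.testBit_lt_two_pow ((mem_range.1 hℓ).trans_le hle)]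

theorem bitSet_surjOn : Set.SurjOn (bitSet n) (range (2 ^ n)) (univ : Finset (Finset (Fin n))) :=
  surjOn_of_injOn_of_card_le _ (fun _ _ => mem_coe.2 (mem_univ _)) bitSet_injOn (by simp)

theorem dom_refl : Dom n h h := fun _ _ => le_rfl

theorem dom_antisymm (hh : h < 2 ^ n) (hℓ : ℓ < 2 ^ n) (h₁ : Dom n h ℓ) (h₂ : Dom n ℓ h) :
    h = ℓ :=
  bitSet_injOn (mem_range.2 hh) (mem_range.2 hℓ)
    ((dom_iff_bitSet_subset.1 h₁).antisymm (dom_iff_bitSet_subset.1 h₂))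

theorem dom_zero_left : Dom n 0 h := fun j _ => by simp [epsb]

theorem dom_two_pow_sub_one_right : Dom n h (2 ^ n - 1) := fun j hj => by
  unfold epsb; split_ifs <;> simp_all [Nat.testBit_two_pow_sub_one]

theorem dom_or_dom_of_notMem_Icc (hh : h < 2 ^ n) (hI : h ∉ Icc 1 (2 ^ n - 2)) (ℓ : ℕ) :
    Dom n h ℓ ∨ Dom n ℓ h := by
  obtain rfl | rfl : h = 0 ∨ h = 2 ^ n - 1 := by
    rw [mem_Icc] at hI
    omega
  · exact .inl dom_zero_left
  · exact .inr dom_two_pow_sub_one_right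

open scoped Classical in
theorem card_filter_dom_range_product :
    #{p ∈ range (2 ^ n) ×ˢ range (2 ^ n) | Dom n p.1 p.2} = 3 ^ n := by
  calc _ = #{p : Finset (Fin n) × Finset (Fin n) | p.1 ⊆ p.2} := by
        refine card_nbij (Prod.map (bitSet n) (bitSet n)) ?_ ?_ ?_
        · intro p hp
          simp only [coe_filter, mem_product, Set.mem_ofPred_eq] at hp
          simpa using dom_iff_bitSet_subset.1 hp.2
        · rintro ⟨h, ℓ⟩ hp ⟨h', ℓ'⟩ hq he
          simp only [coe_filter, mem_product, Set.mem_ofPred_eq] at hp hq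
          simp only [Prod.map, Prod.mk.injEq] at he
          rw [bitSet_injOn hp.1.1 hq.1.1 he.1, bitSet_injOn hp.1.2 hq.1.2 he.2]
        · rintro ⟨a, b⟩ hab
          obtain ⟨h, hh, rfl⟩ := bitSet_surjOn (mem_univ a)
          obtain ⟨ℓ, hℓ, rfl⟩ := bitSet_surjOn (mem_univ b)
          refine ⟨(h, ℓ), ?_, rfl⟩
          simp only [coe_filter, mem_univ, true_and, Set.mem_ofPred_eq] at hab
          simpa [dom_iff_bitSet_subset, hab] using ⟨mem_range.1 hh, mem_range.1 hℓ⟩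
    _ = 3 ^ n := by rw [card_filter_subset_pairs, Fintype.card_fin]

end Bits

theorem choose_two_two_pow_add_one {n : ℕ} (hn : 1 ≤ n) :
    (2 ^ n + 1).choose 2 = 2 ^ (n - 1) * (2 ^ n + 1) := by
  obtain ⟨k, rfl⟩ := Nat.exists_eq_add_of_le' hn
  rw [Nat.choose_two_right, Nat.add_sub_cancel, Nat.add_sub_cancel, pow_succ, ← mul_assoc,
    Nat.mul_div_cancel _ two_pos, mul_comm]

open scoped Classical in
/-- For `n ≥ 3`, the number of unordered pairs of distinct elements of
`{1,…,2^n-2}` that are incomparable for the domination order equals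
`2^{n-1}(2^n+1) - 3^n`. -/
theorem statement8 (n : ℕ) (hn : 3 ≤ n) :
    (((Finset.Icc 1 (2^n - 2)).powersetCard 2).filter
        (fun s => ∀ h ∈ s, ∀ ℓ ∈ s, h ≠ ℓ → ¬ Dom n h ℓ ∧ ¬ Dom n ℓ h)).card =
      2^(n-1) * (2^n + 1) - 3^n := by
  have hIcc : Icc 1 (2 ^ n - 2) ⊆ range (2 ^ n) := fun x hx => by
    rw [mem_Icc] at hx
    exact mem_range.2 (by omega)
  rw [filter_incomparable_powersetCard_two_eq_of_subset hIcc
    fun x hx hxI y _ => dom_or_dom_of_notMem_Icc (mem_range.1 hx) hxI y]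
  have hcount := card_incomparable_pairs_add_card_comparable (s := range (2 ^ n)) (r := Dom n)
    (fun _ _ => dom_refl) (fun x hx y hy => dom_antisymm (mem_range.1 hx) (mem_range.1 hy))
  rw [card_filter_dom_range_product, card_range, choose_two_two_pow_add_one (by omega)] at hcount
  omega
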